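/- arXiv:2106.12198 — 2 statements merged into one kernel-verified Lean document; each statement's English description precedes it below -/
import Mathlib

section
/- Let A and B be finite-dimensional associative unital algebras over a field k with HH¹(A) = 0 and HH¹(B) = 0. Then HH¹(A ⊗_k B) = 0, i.e., every derivation of A ⊗_k B is inner. -/
open TensorProduct

/-- The space of `k`-linear derivations of an algebra `A`. -/
def Der (k A : Type) [Field k] [Ring A] [Algebra k A] : Submodule k (A →ₗ[k] A) where
  carrier := {D | ∀ x y : A, D (x * y) = D x * y + x * D y}
  add_mem' := by
    intro f g hf hg x y
    simp only [LinearMap.add_apply, hf x y, hg x y, add_mul, mul_add]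
    abel
  zero_mem' := by intro x y; simp
  smul_mem' := by
    intro c f hf x y
    simp [hf x y, smul_add, smul_mul_assoc, mul_smul_comm]

/-- The space of inner derivations `x ↦ a * x - x * a` of an algebra `A`. -/
def InnDer (k A : Type) [Field k] [Ring A] [Algebra k A] : Submodule k (A →ₗ[k] A) where
  carrier := {D | ∃ a : A, ∀ x : A, D x = a * x - x * a}
  add_mem' := by
    rintro f g ⟨a, ha⟩ ⟨b, hb⟩
    exact ⟨a + b, fun x => by simp [ha x, hb x, add_mul, mul_add]; abel⟩
  zero_mem' := ⟨0, fun x => by simp⟩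
  smul_mem' := by
    rintro c f ⟨a, ha⟩
    exact ⟨c • a, fun x => by simp [ha x, smul_sub, smul_mul_assoc, mul_smul_comm]⟩

/-- First Hochschild cohomology `HH¹(A) = Der(A)/InnDer(A)`. -/
def HH1 (k A : Type) [Field k] [Ring A] [Algebra k A] :=
  @HasQuotient.Quotient ↥(Der k A) (Submodule k ↥(Der k A)) (@Submodule.hasQuotient k ↥(Der k A) _ _ _)
    ((InnDer k A).comap (Der k A).subtype)


section Aux

variable {k A B : Type} [Field k] [Ring A] [Ring B] [Algebra k A] [Algebra k B]

/-- coordinate map on the B side -/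
noncomputable def piMap {ι : Type} (bB : Module.Basis ι k B) (i : ι) : A ⊗[k] B →ₗ[k] A :=
  (TensorProduct.rid k A).toLinearMap ∘ₗ LinearMap.lTensor A (bB.coord i)

lemma piMap_tmul {ι : Type} (bB : Module.Basis ι k B) (i : ι) (a : A) (c : B) :
    piMap bB i (a ⊗ₜ c) = bB.coord i c • a := by
  simp [piMap]

lemma piMap_expand {n : ℕ} (bB : Module.Basis (Fin n) k B) (x : A ⊗[k] B) :
    x = ∑ i, piMap bB i x ⊗ₜ[k] bB i := by
  induction x using TensorProduct.induction_on with
  | zero => simp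
  | tmul a c =>
      simp only [piMap_tmul]
      rw [Finset.sum_congr rfl (fun i _ => TensorProduct.smul_tmul _ _ _), ← tmul_sum]
      simp [Module.Basis.coord_apply, Module.Basis.sum_repr]
  | add x y hx hy =>
      simp only [map_add, add_tmul, Finset.sum_add_distrib]
      rw [← hx, ← hy]

lemma piMap_mul_left {ι : Type} (bB : Module.Basis ι k B) (i : ι) (x : A) (m : A ⊗[k] B) :
    piMap bB i ((x ⊗ₜ[k] (1:B)) * m) = x * piMap bB i m := by
  induction m using TensorProduct.induction_on with
  | zero => simp
  | tmul a c => simp [Algebra.TensorProduct.tmul_mul_tmul, piMap_tmul, mul_smul_comm]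
  | add m₁ m₂ h1 h2 => simp [mul_add, h1, h2]

lemma piMap_mul_right {ι : Type} (bB : Module.Basis ι k B) (i : ι) (x : A) (m : A ⊗[k] B) :
    piMap bB i (m * (x ⊗ₜ[k] (1:B))) = piMap bB i m * x := by
  induction m using TensorProduct.induction_on with
  | zero => simp
  | tmul a c => simp [Algebra.TensorProduct.tmul_mul_tmul, piMap_tmul, smul_mul_assoc]
  | add m₁ m₂ h1 h2 => simp [add_mul, h1, h2]

/-- coordinate map on the A side, given a linear functional on A -/
noncomputable def qMap (φ : A →ₗ[k] k) : A ⊗[k] B →ₗ[k] B :=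
  (TensorProduct.lid k B).toLinearMap ∘ₗ LinearMap.rTensor B φ

lemma qMap_tmul (φ : A →ₗ[k] k) (a : A) (c : B) :
    qMap φ (a ⊗ₜ c) = φ a • c := by
  simp [qMap]

lemma qMap_mul_right (φ : A →ₗ[k] k) (c : B) (m : A ⊗[k] B) :
    qMap φ (m * ((1:A) ⊗ₜ[k] c)) = qMap φ m * c := by
  induction m using TensorProduct.induction_on with
  | zero => simp
  | tmul a c' => simp [Algebra.TensorProduct.tmul_mul_tmul, qMap_tmul, smul_mul_assoc]
  | add m₁ m₂ h1 h2 => simp [add_mul, h1, h2]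

lemma qMap_mul_left (φ : A →ₗ[k] k) (c : B) (m : A ⊗[k] B) :
    qMap φ (((1:A) ⊗ₜ[k] c) * m) = c * qMap φ m := by
  induction m using TensorProduct.induction_on with
  | zero => simp
  | tmul a c' => simp [Algebra.TensorProduct.tmul_mul_tmul, qMap_tmul, mul_smul_comm]
  | add m₁ m₂ h1 h2 => simp [mul_add, h1, h2]

/-- the inner derivation x ↦ t*x - x*t as a linear map -/
noncomputable def adMap (k : Type) {R : Type} [Field k] [Ring R] [Algebra k R] (t : R) :
    R →ₗ[k] R :=
  LinearMap.mulLeft k t - LinearMap.mulRight k t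

lemma adMap_apply (t x : A) : adMap k t x = t * x - x * t := rfl

lemma adMap_leibniz (t x y : A) :
    adMap k t (x * y) = adMap k t x * y + x * adMap k t y := by
  simp only [adMap_apply]; noncomm_ring

lemma inner_of_subsingleton (h : Subsingleton (HH1 k A))
    (D : A →ₗ[k] A) (hD : ∀ x y : A, D (x * y) = D x * y + x * D y) :
    ∃ a : A, ∀ x : A, D x = a * x - x * a := by
  have htop : (InnDer k A).comap (Der k A).subtype = ⊤ :=
    Submodule.Quotient.subsingleton_iff.mp h
  have : (⟨D, hD⟩ : Der k A) ∈ (InnDer k A).comap (Der k A).subtype := by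
    rw [htop]; trivial
  exact this

end Aux

lemma key {k A B : Type} [Field k] [Ring A] [Ring B] [Algebra k A] [Algebra k B]
    [FiniteDimensional k A] [FiniteDimensional k B]
    (hA : ∀ D : A →ₗ[k] A, (∀ x y : A, D (x * y) = D x * y + x * D y) →
      ∃ a : A, ∀ x : A, D x = a * x - x * a)
    (hB : ∀ D : B →ₗ[k] B, (∀ x y : B, D (x * y) = D x * y + x * D y) →
      ∃ a : B, ∀ x : B, D x = a * x - x * a)
    (D : A ⊗[k] B →ₗ[k] A ⊗[k] B)
    (hD : ∀ x y : A ⊗[k] B, D (x * y) = D x * y + x * D y) :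
    ∃ t : A ⊗[k] B, ∀ x : A ⊗[k] B, D x = t * x - x * t := by
  classical
  let bB : Module.Basis (Fin (Module.finrank k B)) k B := Module.finBasis k B
  -- Step 1: correct D on A ⊗ 1
  have Dstep : ∀ i, ∃ a : A, ∀ x : A,
      piMap bB i (D (x ⊗ₜ[k] (1:B))) = a * x - x * a := by
    intro i
    refine hA (piMap bB i ∘ₗ D ∘ₗ (TensorProduct.mk k A B).flip 1) ?_
    intro x y
    simp only [LinearMap.coe_comp, Function.comp_apply, LinearMap.flip_apply, mk_apply]
    have h1 : (x * y : A) ⊗ₜ[k] (1:B) = (x ⊗ₜ[k] (1:B)) * (y ⊗ₜ[k] (1:B)) := by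
      simp [Algebra.TensorProduct.tmul_mul_tmul]
    rw [h1, hD, map_add, piMap_mul_right, piMap_mul_left]
  choose a ha using Dstep
  set t₁ : A ⊗[k] B := ∑ i, a i ⊗ₜ[k] bB i with ht₁
  have hDt1 : ∀ x : A, D (x ⊗ₜ[k] (1:B)) = t₁ * (x ⊗ₜ[k] 1) - (x ⊗ₜ[k] 1) * t₁ := by
    intro x
    conv_lhs => rw [piMap_expand bB (D (x ⊗ₜ[k] (1:B)))]
    rw [ht₁, Finset.sum_mul, Finset.mul_sum, ← Finset.sum_sub_distrib]
    refine Finset.sum_congr rfl fun i _ => ?_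
    rw [ha i x]
    simp [Algebra.TensorProduct.tmul_mul_tmul, sub_tmul]
  set D1 : A ⊗[k] B →ₗ[k] A ⊗[k] B := D - adMap k t₁ with hD1def
  have hD1 : ∀ x y : A ⊗[k] B, D1 (x * y) = D1 x * y + x * D1 y := by
    intro x y
    simp only [hD1def, LinearMap.sub_apply]
    rw [hD, adMap_leibniz]
    simp only [sub_mul, mul_sub]
    abel
  have hD1A : ∀ x : A, D1 (x ⊗ₜ[k] (1:B)) = 0 := by
    intro x
    simp [hD1def, adMap_apply, hDt1 x]
  -- Step 2: D1 (1 ⊗ c) commutes with A ⊗ 1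
  have comm : ∀ (c : B) (x : A),
      (x ⊗ₜ[k] (1:B)) * D1 ((1:A) ⊗ₜ[k] c) = D1 ((1:A) ⊗ₜ[k] c) * (x ⊗ₜ[k] (1:B)) := by
    intro c x
    have e1 := hD1 (x ⊗ₜ[k] (1:B)) ((1:A) ⊗ₜ[k] c)
    have e2 := hD1 ((1:A) ⊗ₜ[k] c) (x ⊗ₜ[k] (1:B))
    rw [show (x ⊗ₜ[k] (1:B)) * ((1:A) ⊗ₜ[k] c) = x ⊗ₜ[k] c by simp] at e1
    rw [show ((1:A) ⊗ₜ[k] c) * (x ⊗ₜ[k] (1:B)) = x ⊗ₜ[k] c by simp] at e2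
    rw [hD1A, mul_zero, add_zero] at e2
    rw [hD1A, zero_mul, zero_add] at e1
    rw [← e1, ← e2]
  let S : Submodule k A := Subalgebra.toSubmodule (Subalgebra.center k A)
  obtain ⟨p, hp⟩ := S.subtype.exists_leftInverse_of_injective S.ker_subtype
  let zb : Module.Basis (Fin (Module.finrank k ↥S)) k ↥S := Module.finBasis k ↥S
  let φ : Fin (Module.finrank k ↥S) → (A →ₗ[k] k) := fun α => zb.coord α ∘ₗ p
  have hφ : ∀ (α) (z : ↥S), φ α (z : A) = zb.coord α z := by
    intro α z
    have h2 : p ((z : A)) = z := by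
      have := congrArg (fun f => f z) hp
      simpa using this
    simp [φ, h2]
  have hcent : ∀ (z : ↥S) (x : A), (z : A) * x = x * (z : A) := by
    intro z x
    have hz : (z : A) ∈ Subalgebra.center k A := z.2
    exact (Subalgebra.mem_center_iff.mp hz x).symm
  -- recovery: an element commuting with A ⊗ 1 is determined by its Z(A)-coordinates
  have recover : ∀ mE : A ⊗[k] B,
      (∀ x : A, (x ⊗ₜ[k] (1:B)) * mE = mE * (x ⊗ₜ[k] (1:B))) →
      mE = ∑ α, ((zb α : A)) ⊗ₜ[k] qMap (φ α) mE := by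
    intro mE hc
    have hz : ∀ i, piMap bB i mE ∈ S := by
      intro i
      refine (Subalgebra.mem_toSubmodule _).mpr (Subalgebra.mem_center_iff.mpr fun g => ?_)
      have := congrArg (piMap bB i) (hc g)
      rw [piMap_mul_left, piMap_mul_right] at this
      exact this
    have hq : ∀ α, qMap (φ α) mE = ∑ i, zb.coord α ⟨piMap bB i mE, hz i⟩ • bB i := by
      intro α
      conv_lhs => rw [piMap_expand bB mE]
      rw [map_sum]
      refine Finset.sum_congr rfl fun i _ => ?_
      rw [qMap_tmul]
      congr 1
      exact hφ α ⟨_, hz i⟩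
    have hrhs : ∑ α, ((zb α : A)) ⊗ₜ[k] qMap (φ α) mE
        = ∑ i, piMap bB i mE ⊗ₜ[k] bB i := by
      calc ∑ α, ((zb α : A)) ⊗ₜ[k] qMap (φ α) mE
          = ∑ α, ∑ i, zb.coord α ⟨piMap bB i mE, hz i⟩ • ((zb α : A) ⊗ₜ[k] bB i) := by
            refine Finset.sum_congr rfl fun α _ => ?_
            rw [hq α, tmul_sum]
            exact Finset.sum_congr rfl fun i _ => by rw [tmul_smul]
        _ = ∑ i, ∑ α, zb.coord α ⟨piMap bB i mE, hz i⟩ • ((zb α : A) ⊗ₜ[k] bB i) :=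
            Finset.sum_comm
        _ = ∑ i, piMap bB i mE ⊗ₜ[k] bB i := by
            refine Finset.sum_congr rfl fun i _ => ?_
            have h4 : ∑ α, zb.coord α ⟨piMap bB i mE, hz i⟩ • ((zb α : A) ⊗ₜ[k] bB i)
                = (∑ α, zb.coord α ⟨piMap bB i mE, hz i⟩ • (zb α : A)) ⊗ₜ[k] bB i := by
              rw [sum_tmul]
              exact Finset.sum_congr rfl fun α _ => by rw [smul_tmul']
            rw [h4]
            congr 1
            have h5 : (∑ α, zb.coord α ⟨piMap bB i mE, hz i⟩ • (zb α : A))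
                = ((∑ α, zb.coord α ⟨piMap bB i mE, hz i⟩ • zb α : ↥S) : A) := by
              push_cast
              rfl
            rw [h5]
            simp [Module.Basis.coord_apply, Module.Basis.sum_repr]
    rw [hrhs]
    exact piMap_expand bB mE
  -- Step 2 inner derivations of B
  have Estep : ∀ α, ∃ c : B, ∀ x : B,
      qMap (φ α) (D1 ((1:A) ⊗ₜ[k] x)) = c * x - x * c := by
    intro α
    refine hB (qMap (φ α) ∘ₗ D1 ∘ₗ TensorProduct.mk k A B 1) ?_
    intro x y
    simp only [LinearMap.coe_comp, Function.comp_apply, mk_apply]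
    have h1 : (1:A) ⊗ₜ[k] (x * y) = ((1:A) ⊗ₜ[k] x) * ((1:A) ⊗ₜ[k] y) := by simp
    rw [h1, hD1, map_add, qMap_mul_right, qMap_mul_left]
  choose cB hcB using Estep
  set t₂ : A ⊗[k] B := ∑ α, (zb α : A) ⊗ₜ[k] cB α with ht₂
  have ht2A : ∀ x : A, t₂ * (x ⊗ₜ[k] (1:B)) - (x ⊗ₜ[k] (1:B)) * t₂ = 0 := by
    intro x
    rw [sub_eq_zero, ht₂, Finset.sum_mul, Finset.mul_sum]
    refine Finset.sum_congr rfl fun α _ => ?_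
    simp [Algebra.TensorProduct.tmul_mul_tmul, hcent (zb α) x]
  have ht2B : ∀ c : B,
      D1 ((1:A) ⊗ₜ[k] c) = t₂ * ((1:A) ⊗ₜ[k] c) - ((1:A) ⊗ₜ[k] c) * t₂ := by
    intro c
    rw [recover (D1 ((1:A) ⊗ₜ[k] c)) (fun x => comm c x), ht₂,
      Finset.sum_mul, Finset.mul_sum, ← Finset.sum_sub_distrib]
    refine Finset.sum_congr rfl fun α _ => ?_
    rw [hcB α c]
    simp [Algebra.TensorProduct.tmul_mul_tmul, tmul_sub]
  set D2 : A ⊗[k] B →ₗ[k] A ⊗[k] B := D1 - adMap k t₂ with hD2def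
  have hD2 : ∀ x y : A ⊗[k] B, D2 (x * y) = D2 x * y + x * D2 y := by
    intro x y
    simp only [hD2def, LinearMap.sub_apply]
    rw [hD1, adMap_leibniz]
    simp only [sub_mul, mul_sub]
    abel
  have hD2A : ∀ x : A, D2 (x ⊗ₜ[k] (1:B)) = 0 := by
    intro x
    simp only [hD2def, LinearMap.sub_apply, adMap_apply, hD1A x, ht2A x]
    simp [← ht2A x, adMap_apply]
  have hD2B : ∀ c : B, D2 ((1:A) ⊗ₜ[k] c) = 0 := by
    intro c
    simp [hD2def, adMap_apply, ht2B c]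
  have hD2zero : ∀ x : A ⊗[k] B, D2 x = 0 := by
    intro x
    induction x using TensorProduct.induction_on with
    | zero => simp
    | tmul a c =>
        have h1 : a ⊗ₜ[k] c = (a ⊗ₜ[k] (1:B)) * ((1:A) ⊗ₜ[k] c) := by simp
        rw [h1, hD2, hD2A, hD2B]
        simp
    | add x y hx hy => rw [map_add, hx, hy, add_zero]
  refine ⟨t₁ + t₂, fun x => ?_⟩
  have h0 := hD2zero x
  simp only [hD2def, hD1def, LinearMap.sub_apply, adMap_apply] at h0
  have h1 : D x = (t₁ * x - x * t₁) + (t₂ * x - x * t₂) := by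
    have h2 : D x - (t₁ * x - x * t₁) - (t₂ * x - x * t₂) = 0 := h0
    calc D x = (D x - (t₁ * x - x * t₁) - (t₂ * x - x * t₂))
        + ((t₁ * x - x * t₁) + (t₂ * x - x * t₂)) := by abel
    _ = (t₁ * x - x * t₁) + (t₂ * x - x * t₂) := by rw [h2, zero_add]
  rw [h1, add_mul, mul_add]
  abel


/-- If `A` and `B` are finite-dimensional algebras over a field `k` with
`HH¹(A) = 0` and `HH¹(B) = 0`, then `HH¹(A ⊗[k] B) = 0`; i.e. every derivation of the
tensor product algebra `A ⊗[k] B` is inner. -/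
theorem stmt_9 (k A B : Type) [Field k] [Ring A] [Ring B] [Algebra k A] [Algebra k B]
    [FiniteDimensional k A] [FiniteDimensional k B]
    (hA : Subsingleton (HH1 k A)) (hB : Subsingleton (HH1 k B)) :
    Subsingleton (HH1 k (A ⊗[k] B)) ∧
      ∀ D : A ⊗[k] B →ₗ[k] A ⊗[k] B,
        (∀ x y : A ⊗[k] B, D (x * y) = D x * y + x * D y) →
          ∃ t : A ⊗[k] B, ∀ x : A ⊗[k] B, D x = t * x - x * t := by
  have main := key (fun D hD => inner_of_subsingleton hA D hD)
    (fun D hD => inner_of_subsingleton hB D hD)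
  refine ⟨?_, fun D hD => main D hD⟩
  refine Submodule.Quotient.subsingleton_iff.mpr ?_
  rw [Submodule.eq_top_iff']
  rintro ⟨D, hD⟩
  exact main D hD
end

section
/- Let A, B be associative unital algebras over a field k, and M an invertible A-B-bimodule. Suppose (φ, ψ, f) is a triple with φ ∈ Aut(A), ψ ∈ Aut(B), f a k-linear automorphism of M satisfying f(φ⁻¹(a)·m·b) = a·f(m)·ψ(b), and suppose φ = id_A. Then ψ is inner: there exists a unit u ∈ Bˣ with ψ(b) = u·b·u⁻¹ for all b ∈ B, and f(m) = m·u⁻¹ for all m ∈ M. -/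
open TensorProduct

/-- Data of an `A`-`B`-bimodule structure (with `k`-bilinear actions) on a `k`-module `M`:
`l a m` is the left action `a ▷ m` and `r b m` is the right action `m ◁ b`. -/
structure BimodData (k A B M : Type) [Field k] [Ring A] [Ring B] [Algebra k A] [Algebra k B]
    [AddCommGroup M] [Module k M] where
  l : A →ₗ[k] M →ₗ[k] M
  r : B →ₗ[k] M →ₗ[k] M
  l_one : ∀ m, l 1 m = m
  l_mul : ∀ a a' m, l (a * a') m = l a (l a' m)
  r_one : ∀ m, r 1 m = m
  r_mul : ∀ b b' m, r (b * b') m = r b' (r b m)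
  lr : ∀ a b m, l a (r b m) = r b (l a m)

/-- The balancing relations for the tensor product `M ⊗_B N` of a right `B`-module `M`
(action `r`) and a left `B`-module `N` (action `l`): the span of
`(m ◁ b) ⊗ n - m ⊗ (b ▷ n)`. -/
def balRel (k : Type) {B M N : Type} [Field k] [Ring B] [Algebra k B]
    [AddCommGroup M] [Module k M] [AddCommGroup N] [Module k N]
    (r : B →ₗ[k] M →ₗ[k] M) (l : B →ₗ[k] N →ₗ[k] N) : Submodule k (M ⊗[k] N) :=
  Submodule.span k
    {x : M ⊗[k] N | ∃ (b : B) (m : M) (n : N), x = (r b m) ⊗ₜ[k] n - m ⊗ₜ[k] (l b n)}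

/-- A bundled `A`-`B`-bimodule: a `k`-module together with bimodule structure data. -/
structure BimodObj (k A B : Type) [Field k] [Ring A] [Ring B] [Algebra k A] [Algebra k B] where
  M : Type
  [acg : AddCommGroup M]
  [mod : Module k M]
  D : BimodData k A B M

attribute [instance] BimodObj.acg BimodObj.mod

/-- An `A`-`B`-bimodule `M` is invertible if there is a `B`-`A`-bimodule `N` together with
isomorphisms `M ⊗_B N ≅ A` of `A`-`A`-bimodules and `N ⊗_A M ≅ B` of `B`-`B`-bimodules,
where the tensor products are the balanced tensor products (quotients of `⊗[k]` by the
balancing relations). -/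
def IsInvBimod (k A B : Type) [Field k] [Ring A] [Ring B] [Algebra k A] [Algebra k B]
    {M : Type} [AddCommGroup M] [Module k M] (D : BimodData k A B M) : Prop :=
  ∃ N : BimodObj k B A,
    (∃ e : ((M ⊗[k] N.M) ⧸ balRel k D.r N.D.l) ≃ₗ[k] A,
      (∀ (a : A) (m : M) (n : N.M),
        e (Submodule.Quotient.mk ((D.l a m) ⊗ₜ[k] n)) =
          a * e (Submodule.Quotient.mk (m ⊗ₜ[k] n))) ∧
      (∀ (m : M) (n : N.M) (a : A),
        e (Submodule.Quotient.mk (m ⊗ₜ[k] (N.D.r a n))) =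
          e (Submodule.Quotient.mk (m ⊗ₜ[k] n)) * a)) ∧
    (∃ f : ((N.M ⊗[k] M) ⧸ balRel k N.D.r D.l) ≃ₗ[k] B,
      (∀ (b : B) (n : N.M) (m : M),
        f (Submodule.Quotient.mk ((N.D.l b n) ⊗ₜ[k] m)) =
          b * f (Submodule.Quotient.mk (n ⊗ₜ[k] m))) ∧
      (∀ (n : N.M) (m : M) (b : B),
        f (Submodule.Quotient.mk (n ⊗ₜ[k] (D.r b m))) =
          f (Submodule.Quotient.mk (n ⊗ₜ[k] m)) * b))

section Aux

variable {k A B M : Type} [Field k] [Ring A] [Ring B] [Algebra k A] [Algebra k B]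
  [AddCommGroup M] [Module k M] (D : BimodData k A B M) (N : BimodObj k B A)

/-- extension lemma : linear maps out of the balanced quotient agree if they agree on
classes of pure tensors -/
lemma quotTensor_ext {X Y P : Type}
    [AddCommGroup X] [Module k X] [AddCommGroup Y] [Module k Y]
    [AddCommGroup P] [Module k P] {S : Submodule k (X ⊗[k] Y)}
    {F G : (X ⊗[k] Y ⧸ S) →ₗ[k] P}
    (h : ∀ (x : X) (y : Y), F (Submodule.Quotient.mk (x ⊗ₜ[k] y)) =
      G (Submodule.Quotient.mk (x ⊗ₜ[k] y)))
    (z : X ⊗[k] Y ⧸ S) : F z = G z := by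
  obtain ⟨t, rfl⟩ := Submodule.mkQ_surjective S z
  induction t using TensorProduct.induction_on with
  | zero => simp
  | tmul x y => simpa using h x y
  | add a b ha hb => simp only [map_add, ha, hb]

/-- descend `id ⊗ g` to the balanced quotient, for `g` commuting with the left `A`-action -/
noncomputable def opR (g : M →ₗ[k] M) (hg : ∀ a m, g (D.l a m) = D.l a (g m)) :
    ((N.M ⊗[k] M) ⧸ balRel k N.D.r D.l) →ₗ[k] ((N.M ⊗[k] M) ⧸ balRel k N.D.r D.l) :=
  Submodule.mapQ _ _ (LinearMap.lTensor N.M g) (by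
    apply Submodule.span_le.mpr
    rintro x ⟨a, n, m, rfl⟩
    simp only [SetLike.mem_coe, Submodule.mem_comap, map_sub, LinearMap.lTensor_tmul]
    rw [hg]
    exact Submodule.subset_span ⟨a, n, g m, rfl⟩)

lemma opR_mk (g : M →ₗ[k] M) (hg : ∀ a m, g (D.l a m) = D.l a (g m)) (n : N.M) (m : M) :
    opR D N g hg (Submodule.Quotient.mk (n ⊗ₜ[k] m)) =
      Submodule.Quotient.mk (n ⊗ₜ[k] g m) := by
  exact (Submodule.mapQ_apply ..).trans (congrArg Submodule.Quotient.mk (LinearMap.lTensor_tmul ..))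

/-- descend the left `B`-action to the balanced quotient -/
noncomputable def opL (b : B) :
    ((N.M ⊗[k] M) ⧸ balRel k N.D.r D.l) →ₗ[k] ((N.M ⊗[k] M) ⧸ balRel k N.D.r D.l) :=
  Submodule.mapQ _ _ (LinearMap.rTensor M (N.D.l b)) (by
    apply Submodule.span_le.mpr
    rintro x ⟨a, n, m, rfl⟩
    simp only [SetLike.mem_coe, Submodule.mem_comap, map_sub, LinearMap.rTensor_tmul]
    rw [N.D.lr]
    exact Submodule.subset_span ⟨a, N.D.l b n, m, rfl⟩)

lemma opL_mk (b : B) (n : N.M) (m : M) :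
    opL D N b (Submodule.Quotient.mk (n ⊗ₜ[k] m)) =
      Submodule.Quotient.mk ((N.D.l b n) ⊗ₜ[k] m) := by
  exact (Submodule.mapQ_apply ..).trans (congrArg Submodule.Quotient.mk (LinearMap.rTensor_tmul ..))

end Aux


/-- Let `M` be an invertible `A`-`B`-bimodule, `ψ ∈ Aut(B)`, and `f` a linear
automorphism of `M` satisfying `f (a ▷ m ◁ b) = a ▷ f m ◁ ψ b` (i.e. the triple
`(id_A, ψ, f)` satisfies the intertwining condition).  Then `ψ` is inner: there is a unit
`u ∈ Bˣ` with `ψ b = u * b * u⁻¹` for all `b`, and `f m = m ◁ u⁻¹` for all `m`. -/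
theorem stmt_12 (k A B M : Type) [Field k] [Ring A] [Ring B] [Algebra k A] [Algebra k B]
    [AddCommGroup M] [Module k M] (D : BimodData k A B M) (hInv : IsInvBimod k A B D)
    (ψ : B ≃ₐ[k] B) (f : M ≃ₗ[k] M)
    (hf : ∀ (a : A) (b : B) (m : M), f (D.l a (D.r b m)) = D.l a (D.r (ψ b) (f m))) :
    ∃ u : Bˣ, (∀ b : B, ψ b = ↑u * b * ↑u⁻¹) ∧ (∀ m : M, f m = D.r ↑u⁻¹ m) := by
  obtain ⟨N, ⟨e, he1, he2⟩, ⟨f₀, hf01, hf02⟩⟩ := hInv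
  -- basic semilinearity facts
  have hfA : ∀ (a : A) (m : M), f (D.l a m) = D.l a (f m) := by
    intro a m
    have := hf a 1 m
    rwa [D.r_one, map_one, D.r_one] at this
  have hfB : ∀ (b : B) (m : M), f (D.r b m) = D.r (ψ b) (f m) := by
    intro b m
    have := hf 1 b m
    rwa [D.l_one, D.l_one] at this
  have hgA : ∀ (a : A) (m : M), f.symm (D.l a m) = D.l a (f.symm m) := by
    intro a m
    apply f.injective
    rw [f.apply_symm_apply, hfA, f.apply_symm_apply]
  have hgB : ∀ (b : B) (m : M), f.symm (D.r b m) = D.r (ψ.symm b) (f.symm m) := by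
    intro b m
    apply f.injective
    rw [f.apply_symm_apply, hfB, ψ.apply_symm_apply, f.apply_symm_apply]
  -- operators on the quotient
  have hRcomm : ∀ (b : B) (a : A) (m : M), (D.r b) (D.l a m) = D.l a (D.r b m) :=
    fun b a m => (D.lr a b m).symm
  set F : ((N.M ⊗[k] M) ⧸ balRel k N.D.r D.l) →ₗ[k] ((N.M ⊗[k] M) ⧸ balRel k N.D.r D.l) :=
    opR D N f.toLinearMap hfA with hFdef
  set G : ((N.M ⊗[k] M) ⧸ balRel k N.D.r D.l) →ₗ[k] ((N.M ⊗[k] M) ⧸ balRel k N.D.r D.l) :=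
    opR D N f.symm.toLinearMap hgA with hGdef
  set R : B → ((N.M ⊗[k] M) ⧸ balRel k N.D.r D.l) →ₗ[k] ((N.M ⊗[k] M) ⧸ balRel k N.D.r D.l) :=
    fun b => opR D N (D.r b) (hRcomm b) with hRdef
  have hF_mk : ∀ (n : N.M) (m : M), F (Submodule.Quotient.mk (n ⊗ₜ[k] m)) =
      Submodule.Quotient.mk (n ⊗ₜ[k] f m) := fun n m => opR_mk D N _ hfA n m
  have hG_mk : ∀ (n : N.M) (m : M), G (Submodule.Quotient.mk (n ⊗ₜ[k] m)) =
      Submodule.Quotient.mk (n ⊗ₜ[k] f.symm m) := fun n m => opR_mk D N _ hgA n m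
  have hR_mk : ∀ (b : B) (n : N.M) (m : M), R b (Submodule.Quotient.mk (n ⊗ₜ[k] m)) =
      Submodule.Quotient.mk (n ⊗ₜ[k] D.r b m) := fun b n m => opR_mk D N _ (hRcomm b) n m
  -- f₀ transports opL to left mult and R to right mult
  have hLmul : ∀ (b : B) (x : (N.M ⊗[k] M) ⧸ balRel k N.D.r D.l),
      f₀ (opL D N b x) = b * f₀ x := by
    intro b x
    refine quotTensor_ext (F := f₀.toLinearMap ∘ₗ opL D N b)
      (G := (LinearMap.mulLeft k b) ∘ₗ f₀.toLinearMap) ?_ x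
    intro n m
    simp only [LinearMap.coe_comp, Function.comp_apply, LinearEquiv.coe_coe,
      LinearMap.mulLeft_apply, opL_mk]
    exact hf01 b n m
  have hRmul : ∀ (b : B) (x : (N.M ⊗[k] M) ⧸ balRel k N.D.r D.l),
      f₀ (R b x) = f₀ x * b := by
    intro b x
    refine quotTensor_ext (F := f₀.toLinearMap ∘ₗ R b)
      (G := (LinearMap.mulRight k b) ∘ₗ f₀.toLinearMap) ?_ x
    intro n m
    simp only [LinearMap.coe_comp, Function.comp_apply, LinearEquiv.coe_coe,
      LinearMap.mulRight_apply, hRdef, opR_mk]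
    exact hf02 n m b
  -- commutation relations
  have hFL : ∀ (b : B) (x : (N.M ⊗[k] M) ⧸ balRel k N.D.r D.l),
      F (opL D N b x) = opL D N b (F x) := by
    intro b x
    refine quotTensor_ext (F := F ∘ₗ opL D N b) (G := opL D N b ∘ₗ F) ?_ x
    intro n m
    simp only [LinearMap.coe_comp, Function.comp_apply, opL_mk, hF_mk]
  have hGL : ∀ (b : B) (x : (N.M ⊗[k] M) ⧸ balRel k N.D.r D.l),
      G (opL D N b x) = opL D N b (G x) := by
    intro b x
    refine quotTensor_ext (F := G ∘ₗ opL D N b) (G := opL D N b ∘ₗ G) ?_ x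
    intro n m
    simp only [LinearMap.coe_comp, Function.comp_apply, opL_mk, hG_mk]
  have hFR : ∀ (b : B) (x : (N.M ⊗[k] M) ⧸ balRel k N.D.r D.l),
      F (R b x) = R (ψ b) (F x) := by
    intro b x
    refine quotTensor_ext (F := F ∘ₗ R b) (G := R (ψ b) ∘ₗ F) ?_ x
    intro n m
    simp only [LinearMap.coe_comp, Function.comp_apply, hR_mk, hF_mk]
    rw [hfB]
  have hGF : ∀ (x : (N.M ⊗[k] M) ⧸ balRel k N.D.r D.l), G (F x) = x := by
    intro x
    refine quotTensor_ext (F := G ∘ₗ F) (G := LinearMap.id) ?_ x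
    intro n m
    simp only [LinearMap.coe_comp, Function.comp_apply, hF_mk, hG_mk, LinearMap.id_coe,
      id_eq, f.symm_apply_apply]
  have hFG : ∀ (x : (N.M ⊗[k] M) ⧸ balRel k N.D.r D.l), F (G x) = x := by
    intro x
    refine quotTensor_ext (F := F ∘ₗ G) (G := LinearMap.id) ?_ x
    intro n m
    simp only [LinearMap.coe_comp, Function.comp_apply, hF_mk, hG_mk, LinearMap.id_coe,
      id_eq, f.apply_symm_apply]
  -- the candidate unit
  set y := f₀.symm 1 with hy
  set v := f₀ (F y) with hv
  set w := f₀ (G y) with hw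
  have hinvL : ∀ (b : B), opL D N b y = f₀.symm b := by
    intro b
    apply f₀.injective
    rw [hLmul, f₀.apply_symm_apply, mul_one, f₀.apply_symm_apply]
  have hinvR : ∀ (b : B), R b y = f₀.symm b := by
    intro b
    apply f₀.injective
    rw [hRmul, f₀.apply_symm_apply, one_mul, f₀.apply_symm_apply]
  have key1 : ∀ (b : B), b * v = v * ψ b := by
    intro b
    calc b * v = f₀ (opL D N b (F y)) := (hLmul b _).symm
      _ = f₀ (F (opL D N b y)) := by rw [hFL]
      _ = f₀ (F (R b y)) := by rw [hinvL, hinvR]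
      _ = f₀ (R (ψ b) (F y)) := by rw [hFR]
      _ = v * ψ b := by rw [hRmul, hv]
  have hvw : v * w = 1 := by
    calc v * w = f₀ (opL D N v (G y)) := (hLmul v _).symm
      _ = f₀ (G (opL D N v y)) := by rw [hGL]
      _ = f₀ (G (f₀.symm v)) := by rw [hinvL]
      _ = f₀ (G (F y)) := by rw [hv, f₀.symm_apply_apply]
      _ = 1 := by rw [hGF, hy, f₀.apply_symm_apply]
  have hwv : w * v = 1 := by
    calc w * v = f₀ (opL D N w (F y)) := (hLmul w _).symm
      _ = f₀ (F (opL D N w y)) := by rw [hFL]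
      _ = f₀ (F (f₀.symm w)) := by rw [hinvL]
      _ = f₀ (F (G y)) := by rw [hw, f₀.symm_apply_apply]
      _ = 1 := by rw [hFG, hy, f₀.apply_symm_apply]
  refine ⟨⟨w, v, hwv, hvw⟩, ?_, ?_⟩
  · intro b
    show ψ b = w * b * v
    rw [mul_assoc, key1, ← mul_assoc, hwv, one_mul]
  · -- f m = D.r v m
    intro m
    show f m = D.r v m
    have hFv : ∀ (x : (N.M ⊗[k] M) ⧸ balRel k N.D.r D.l), f₀ (F x) = f₀ x * v := by
      intro x
      calc f₀ (F x) = f₀ (F (f₀.symm (f₀ x))) := by rw [f₀.symm_apply_apply]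
        _ = f₀ (F (R (f₀ x) y)) := by rw [hinvR]
        _ = f₀ (R (ψ (f₀ x)) (F y)) := by rw [hFR]
        _ = v * ψ (f₀ x) := by rw [hRmul, hv]
        _ = f₀ x * v := (key1 _).symm
    have hzero : ∀ (n : N.M),
        (Submodule.Quotient.mk (n ⊗ₜ[k] (f m - D.r v m)) :
          (N.M ⊗[k] M) ⧸ balRel k N.D.r D.l) = 0 := by
      intro n
      have h1 : f₀ (Submodule.Quotient.mk (n ⊗ₜ[k] f m) :
          (N.M ⊗[k] M) ⧸ balRel k N.D.r D.l) =
          f₀ (Submodule.Quotient.mk (n ⊗ₜ[k] D.r v m)) := by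
        rw [← hF_mk, ← hR_mk, hFv, hRmul]
      have h2 := f₀.injective h1
      rw [TensorProduct.tmul_sub, Submodule.Quotient.mk_sub, sub_eq_zero]
      exact h2
    -- now use the other iso e
    obtain ⟨t, ht⟩ := Submodule.mkQ_surjective (balRel k D.r N.D.l) (e.symm 1)
    have hgen : ∀ (t : M ⊗[k] N.M),
        D.l (e (Submodule.Quotient.mk t)) (f m - D.r v m) = 0 := by
      intro t
      induction t using TensorProduct.induction_on with
      | zero =>
        simp
      | tmul m' n =>
        -- build the map λ̄ : (N⊗M)/bal → M,  n ⊗ m'' ↦ e(mk (m'⊗n)) ▷ m''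
        set lam : (N.M ⊗[k] M) →ₗ[k] M :=
          TensorProduct.lift (D.l ∘ₗ (e.toLinearMap ∘ₗ
            ((balRel k D.r N.D.l).mkQ ∘ₗ (TensorProduct.mk k M N.M m')))) with hlam
        have hker : balRel k N.D.r D.l ≤ LinearMap.ker lam := by
          apply Submodule.span_le.mpr
          rintro z ⟨a, n, m'', rfl⟩
          simp only [SetLike.mem_coe, LinearMap.mem_ker, map_sub, hlam,
            TensorProduct.lift.tmul, LinearMap.coe_comp, Function.comp_apply,
            TensorProduct.mk_apply, Submodule.mkQ_apply, LinearEquiv.coe_coe]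
          rw [he2, D.l_mul, sub_self]
        have happ : ∀ (n : N.M) (m'' : M),
            Submodule.liftQ _ lam hker (Submodule.Quotient.mk (n ⊗ₜ[k] m'')) =
              D.l (e (Submodule.Quotient.mk (m' ⊗ₜ[k] n))) m'' := by
          intro n m''
          simp only [Submodule.liftQ_apply, hlam, TensorProduct.lift.tmul,
            LinearMap.coe_comp, Function.comp_apply, TensorProduct.mk_apply,
            Submodule.mkQ_apply, LinearEquiv.coe_coe]
        calc D.l (e (Submodule.Quotient.mk (m' ⊗ₜ[k] n))) (f m - D.r v m)
            = Submodule.liftQ _ lam hker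
                (Submodule.Quotient.mk (n ⊗ₜ[k] (f m - D.r v m))) := (happ n _).symm
          _ = 0 := by rw [hzero n, map_zero]
      | add t1 t2 h1 h2 =>
        rw [Submodule.Quotient.mk_add, map_add, map_add, LinearMap.add_apply, h1, h2,
          add_zero]
    have h1 : (1 : A) = e (Submodule.Quotient.mk t) := by
      rw [← Submodule.mkQ_apply, ht, e.apply_symm_apply]
    have h2 := hgen t
    rw [← h1, D.l_one] at h2
    exact sub_eq_zero.mp h2
end
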